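/- arXiv:2208.14993 — 7 statements merged into one kernel-verified Lean document; each statement's English description precedes it below -/
import Mathlib

section
/- Let ω₀ ≠ 0 and a be real numbers, ω̂ and b real row vectors of length d−1, Â a symmetric (d−1)×(d−1) real matrix, and N a positive integer. Define the symmetric matrix S = (1/(ω₀N))(ω̂ᵀb + bᵀω̂ − (a/ω₀) ω̂ᵀω̂). Then −ω₀² · det(Â − N·S) = det A_ω, where A_ω is the (d+1)×(d+1) matrix [[0, ω₀, ω̂], [ω₀, a, b], [ω̂ᵀ, bᵀ, Â]]. -/
open Matrix

/-- Relating the iso-energetic twist determinant `det A_ω` (with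
`A_ω = [[0, ω₀, ω̂], [ω₀, a, b], [ω̂ᵀ, bᵀ, Â]]`) to the matrix
`S = (1/(ω₀N))(ω̂ᵀb + bᵀω̂ − (a/ω₀) ω̂ᵀω̂)`:
`−ω₀² · det(Â − N·S) = det A_ω`.  Here `d = n + 1 ≥ 2`. -/
theorem isoenergetic_twist_det (n : ℕ) (hn : 1 ≤ n) (N : ℕ) (hN : 1 ≤ N)
    (ω₀ a : ℝ) (hω₀ : ω₀ ≠ 0)
    (ωhat b : Matrix (Fin 1) (Fin n) ℝ) (Ahat : Matrix (Fin n) (Fin n) ℝ)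
    (hAhat : Ahat.IsSymm)
    (S : Matrix (Fin n) (Fin n) ℝ)
    (hS : S = (1 / (ω₀ * N)) • (ωhatᵀ * b + bᵀ * ωhat - (a / ω₀) • (ωhatᵀ * ωhat))) :
    -(ω₀ ^ 2) * (Ahat - (N : ℝ) • S).det
      = (Matrix.fromBlocks
          (Matrix.of (fun i j : Fin 2 =>
            if i = 0 ∧ j = 0 then 0
            else if i = 1 ∧ j = 1 then a else ω₀))
          (Matrix.of (fun (i : Fin 2) (j : Fin n) =>
            if i = 0 then ωhat 0 j else b 0 j))
          (Matrix.of (fun (j : Fin n) (i : Fin 2) =>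
            if i = 0 then ωhat 0 j else b 0 j))
          Ahat).det := by
  have hN' : (N : ℝ) ≠ 0 := by positivity
  set A : Matrix (Fin 2) (Fin 2) ℝ := Matrix.of (fun i j : Fin 2 =>
            if i = 0 ∧ j = 0 then 0
            else if i = 1 ∧ j = 1 then a else ω₀) with hA
  set B : Matrix (Fin 2) (Fin n) ℝ := Matrix.of (fun (i : Fin 2) (j : Fin n) =>
            if i = 0 then ωhat 0 j else b 0 j) with hB
  set C : Matrix (Fin n) (Fin 2) ℝ := Matrix.of (fun (j : Fin n) (i : Fin 2) =>
            if i = 0 then ωhat 0 j else b 0 j) with hC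
  have hAe : A = !![0, ω₀; ω₀, a] := by
    ext i j
    fin_cases i <;> fin_cases j <;> simp [hA]
  have hM1 : A * !![-a / ω₀ ^ 2, 1 / ω₀; 1 / ω₀, 0] = 1 := by
    rw [hAe]
    ext i j
    fin_cases i <;> fin_cases j <;>
      simp [Matrix.mul_apply, Fin.sum_univ_two] <;> field_simp <;> ring
  have hM2 : !![-a / ω₀ ^ 2, 1 / ω₀; 1 / ω₀, 0] * A = 1 := by
    rw [hAe]
    ext i j
    fin_cases i <;> fin_cases j <;>
      simp [Matrix.mul_apply, Fin.sum_univ_two] <;> field_simp <;> ring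
  letI : Invertible A := ⟨!![-a / ω₀ ^ 2, 1 / ω₀; 1 / ω₀, 0], hM2, hM1⟩
  rw [Matrix.det_fromBlocks₁₁]
  have hdetA : A.det = -(ω₀ ^ 2) := by
    rw [hAe, Matrix.det_fin_two_of]; ring
  have hinv : (⅟A : Matrix (Fin 2) (Fin 2) ℝ) = !![-a / ω₀ ^ 2, 1 / ω₀; 1 / ω₀, 0] := rfl
  have hSchur : Ahat - C * ⅟A * B = Ahat - (N : ℝ) • S := by
    ext i j
    rw [hS]
    simp only [Matrix.sub_apply, Matrix.mul_apply, hinv, Matrix.smul_apply,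
      Matrix.add_apply, Matrix.sub_apply, smul_eq_mul, Fin.sum_univ_two,
      Matrix.transpose_apply, hB, hC, Matrix.of_apply]
    simp only [Matrix.mul_apply, Fin.sum_univ_one, Matrix.transpose_apply]
    have : (0 : Fin 2) ≠ 1 := by decide
    norm_num [Matrix.cons_val_zero, Matrix.cons_val_one]
    field_simp
    ring
  rw [hdetA, hSchur]
end

section
/- Let ω₀ ≠ 0 and a ≠ 0 be real numbers, ω̂ a real row vector of length d−1, and Â a symmetric (d−1)×(d−1) real matrix. Set b = (a/ω₀)·ω̂, A = [[a, b],[bᵀ, Â]], and A_ω = [[0, ω₀, ω̂],[ω₀, a, b],[ω̂ᵀ, bᵀ, Â]]. Then det A_ω = −(ω₀²/a) · det A. In particular, under this relation b = (a/ω₀)ω̂, det A ≠ 0 if and only if det A_ω ≠ 0. -/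
/-!
Subtracting `ω₀ / a` times the `(a, b)` row of `A_ω` from its `(0, ω₀, ω̂)` row leaves the row
`(-ω₀² / a, 0, 0)`, because `(ω₀, ω̂) = (ω₀ / a) • (a, b)` is exactly the relation `b = (a / ω₀) ω̂`.
Expanding along that row gives `-(ω₀² / a) · det A`, since deleting it together with the first
column of `A_ω` leaves `A`.
-/

open Matrix

def bordered {R ι : Type*} (d : R) (u v : ι → R) (A : Matrix ι ι R) :
    Matrix (Fin 1 ⊕ ι) (Fin 1 ⊕ ι) R :=
  fromBlocks (of fun _ _ => d) (replicateRow (Fin 1) u) (replicateCol (Fin 1) v) A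

theorem det_bordered_of_row_eq_smul {R ι : Type*} [CommRing R] [Fintype ι] [DecidableEq ι]
    (d : R) (u v : ι → R) (A : Matrix ι ι R) (c : R) (i₀ : ι) (hu : u = c • A i₀) :
    (bordered d u v A).det = (d - c * v i₀) * A.det := by
  set B := bordered d u v A
  have hreduced : B.updateRow (Sum.inl 0) (B (Sum.inl 0) + (-c) • B (Sum.inr i₀)) =
      fromBlocks (of fun _ _ : Fin 1 => d - c * v i₀) 0 (replicateCol (Fin 1) v) A := by
    subst hu
    ext (i | i) (j | j) <;>
      simp [B, bordered, updateRow_apply, Fin.fin_one_eq_zero, sub_eq_add_neg]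
  rw [← det_updateRow_add_smul_self B Sum.inl_ne_inr (-c), hreduced, det_fromBlocks_zero₁₂,
    det_unique, of_apply]

def finTwoSumEquiv (ι : Type*) : Fin 1 ⊕ (Fin 1 ⊕ ι) ≃ Fin 2 ⊕ ι :=
  (Equiv.sumAssoc (Fin 1) (Fin 1) ι).symm.trans (Equiv.sumCongr finSumFinEquiv (Equiv.refl ι))

@[simp] theorem finTwoSumEquiv_inl {ι : Type*} (i : Fin 1) :
    finTwoSumEquiv ι (Sum.inl i) = Sum.inl 0 := by
  rw [Fin.fin_one_eq_zero i]; rfl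

@[simp] theorem finTwoSumEquiv_inr_inl {ι : Type*} (i : Fin 1) :
    finTwoSumEquiv ι (Sum.inr (Sum.inl i)) = Sum.inl 1 := by
  rw [Fin.fin_one_eq_zero i]; rfl

@[simp] theorem finTwoSumEquiv_inr_inr {ι : Type*} (i : ι) :
    finTwoSumEquiv ι (Sum.inr (Sum.inr i)) = Sum.inr i :=
  rfl

theorem billiard_twist_det_general (n : ℕ)
    (ω₀ a : ℝ) (hω₀ : ω₀ ≠ 0) (ha : a ≠ 0)
    (ωhat : Matrix (Fin 1) (Fin n) ℝ) (Ahat : Matrix (Fin n) (Fin n) ℝ)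
    (b : Matrix (Fin 1) (Fin n) ℝ) (hb : b = (a / ω₀) • ωhat)
    (A : Matrix (Fin 1 ⊕ Fin n) (Fin 1 ⊕ Fin n) ℝ)
    (hA : A = Matrix.fromBlocks (a • (1 : Matrix (Fin 1) (Fin 1) ℝ)) b bᵀ Ahat)
    (Aω : Matrix (Fin 2 ⊕ Fin n) (Fin 2 ⊕ Fin n) ℝ)
    (hAω : Aω = Matrix.fromBlocks
          (Matrix.of (fun i j : Fin 2 =>
            if i = 0 ∧ j = 0 then 0
            else if i = 1 ∧ j = 1 then a else ω₀))
          (Matrix.of (fun (i : Fin 2) (j : Fin n) =>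
            if i = 0 then ωhat 0 j else b 0 j))
          (Matrix.of (fun (j : Fin n) (i : Fin 2) =>
            if i = 0 then ωhat 0 j else b 0 j))
          Ahat) :
    Aω.det = -(ω₀ ^ 2 / a) * A.det ∧ (A.det ≠ 0 ↔ Aω.det ≠ 0) := by
  set ω : Fin 1 ⊕ Fin n → ℝ := Sum.elim (fun _ => ω₀) (ωhat 0)
  have hborder : Aω.submatrix (finTwoSumEquiv _) (finTwoSumEquiv _) = bordered 0 ω ω A := by
    subst hA hAω
    ext (i | i | i) (j | j | j) <;> simp [bordered, ω, Fin.fin_one_eq_zero]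
  have hω : ω = (ω₀ / a) • A (Sum.inl 0) := by
    subst hA hb
    ext (i | i) <;> simp [ω, Fin.fin_one_eq_zero] <;> field_simp
  have hdet : Aω.det = -(ω₀ ^ 2 / a) * A.det := by
    rw [← det_submatrix_equiv_self (finTwoSumEquiv _), hborder,
      det_bordered_of_row_eq_smul 0 ω ω A _ _ hω]
    simp only [ω, Sum.elim_inl]
    ring
  have hcoeff : -(ω₀ ^ 2 / a) ≠ 0 := neg_ne_zero.mpr (div_ne_zero (pow_ne_zero 2 hω₀) ha)
  exact ⟨hdet, by rw [hdet, mul_ne_zero_iff_left hcoeff]⟩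

/-- When `b = (a/ω₀)·ω̂`, the bordered determinant satisfies
`det A_ω = −(ω₀²/a) · det A`, where `A = [[a, b],[bᵀ, Â]]` and
`A_ω = [[0, ω₀, ω̂],[ω₀, a, b],[ω̂ᵀ, bᵀ, Â]]`.  In particular `det A ≠ 0 ↔ det A_ω ≠ 0`. -/
theorem billiard_twist_det (n : ℕ) (hn : 1 ≤ n)
    (ω₀ a : ℝ) (hω₀ : ω₀ ≠ 0) (ha : a ≠ 0)
    (ωhat : Matrix (Fin 1) (Fin n) ℝ) (Ahat : Matrix (Fin n) (Fin n) ℝ)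
    (hAhat : Ahat.IsSymm)
    (b : Matrix (Fin 1) (Fin n) ℝ) (hb : b = (a / ω₀) • ωhat)
    (A : Matrix (Fin 1 ⊕ Fin n) (Fin 1 ⊕ Fin n) ℝ)
    (hA : A = Matrix.fromBlocks (a • (1 : Matrix (Fin 1) (Fin 1) ℝ)) b bᵀ Ahat)
    (Aω : Matrix (Fin 2 ⊕ Fin n) (Fin 2 ⊕ Fin n) ℝ)
    (hAω : Aω = Matrix.fromBlocks
          (Matrix.of (fun i j : Fin 2 =>
            if i = 0 ∧ j = 0 then 0
            else if i = 1 ∧ j = 1 then a else ω₀))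
          (Matrix.of (fun (i : Fin 2) (j : Fin n) =>
            if i = 0 then ωhat 0 j else b 0 j))
          (Matrix.of (fun (j : Fin n) (i : Fin 2) =>
            if i = 0 then ωhat 0 j else b 0 j))
          Ahat) :
    Aω.det = -(ω₀ ^ 2 / a) * A.det ∧ (A.det ≠ 0 ↔ Aω.det ≠ 0) :=
  billiard_twist_det_general n ω₀ a hω₀ ha ωhat Ahat b hb A hA Aω hAω
end

section
/- Let ρ ≥ 0, C₁ > 0, C₂ ∈ ℝ, and let W : {q ∈ ℝ^d : ‖q‖ > ρ} → ℝ satisfy W(q) ≥ C₁/(‖q‖ − ρ) − C₂ for all such q. Let γ : [0, T] → ℝ^d be Lipschitz continuous with ‖γ(t)‖ > ρ for t ≠ t_c and ‖γ(t_c)‖ = ρ for some t_c ∈ (0, T). Then the integral ∫₀^T W(γ(t)) dt diverges to +∞ (i.e., the lower-bound function C₁/(‖γ(t)‖ − ρ) − C₂ is not Lebesgue integrable on [0,T]). -/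
open MeasureTheory Set

/-! Near the collision time the Lipschitz bound gives `0 < ‖γ t‖ - ρ ≤ L (t - t_c)`, so the
integrand dominates a positive multiple of `(t - t_c)⁻¹` on `(t_c, T]`, which is not integrable. -/

theorem LipschitzOnWith.norm_sub_norm_le_mul_dist {α E : Type*} [PseudoMetricSpace α]
    [SeminormedAddCommGroup E] {K : NNReal} {f : α → E} {s : Set α}
    (hf : LipschitzOnWith K f s) {x y : α} (hx : x ∈ s) (hy : y ∈ s) :
    ‖f x‖ - ‖f y‖ ≤ K * dist x y :=
  (norm_sub_norm_le _ _).trans (by simpa only [dist_eq_norm] using hf.dist_le_mul x hx y hy)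

theorem not_integrableOn_Ioc_inv_sub {a b : ℝ} (hab : a < b) :
    ¬ IntegrableOn (fun t => (t - a)⁻¹) (Ioc a b) := by
  rw [← intervalIntegrable_iff_integrableOn_Ioc_of_le hab.le, intervalIntegrable_sub_inv_iff]
  simp [hab.ne]

theorem not_integrableOn_Ioc_div_of_le_mul_sub {f : ℝ → ℝ} {a b C K : ℝ} (hab : a < b)
    (hC : C ≠ 0) (hf : ∀ t ∈ Ioc a b, 0 < f t ∧ f t ≤ K * (t - a)) :
    ¬ IntegrableOn (fun t => C / f t) (Ioc a b) := by
  intro h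
  refine not_integrableOn_Ioc_inv_sub hab (Integrable.mono' (h.const_mul (K / C)) ?_ ?_)
  · exact ((continuousOn_id.sub continuousOn_const).inv₀ fun t ht => (sub_pos.2 ht.1).ne')
      |>.aestronglyMeasurable measurableSet_Ioc
  · refine (ae_restrict_iff' measurableSet_Ioc).2 (.of_forall fun t ht => ?_)
    obtain ⟨hpos, hle⟩ := hf t ht
    have hta : 0 < t - a := sub_pos.2 ht.1
    calc ‖(t - a)⁻¹‖ = (t - a)⁻¹ := Real.norm_of_nonneg (inv_nonneg.2 hta.le)
      _ ≤ K / f t := by rw [le_div_iff₀ hpos, inv_mul_le_iff₀ hta, mul_comm]; exact hle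
      _ = K / C * (C / f t) := by field_simp

theorem collision_integral_diverges_general (d : ℕ)
    (ρ C₁ C₂ T : ℝ) (hC₁ : 0 < C₁)
    (γ : ℝ → EuclideanSpace ℝ (Fin d)) (L : NNReal)
    (hγ : LipschitzOnWith L γ (Icc 0 T))
    (tc : ℝ) (htc : tc ∈ Ioo 0 T)
    (hcol : ‖γ tc‖ = ρ)
    (hsep : ∀ t ∈ Icc 0 T, t ≠ tc → ρ < ‖γ t‖) :
    ¬ IntegrableOn (fun t => C₁ / (‖γ t‖ - ρ) - C₂) (Icc 0 T) volume := by
  intro h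
  have hsub : Ioc tc T ⊆ Icc 0 T := Ioc_subset_Icc_self.trans (Icc_subset_Icc_left htc.1.le)
  have hdiv : IntegrableOn (fun t => C₁ / (‖γ t‖ - ρ)) (Ioc tc T) :=
    ((h.add (integrableOn_const measure_Icc_lt_top.ne (C := C₂))).mono_set hsub).congr_fun
      (fun t _ => sub_add_cancel _ _) measurableSet_Ioc
  refine not_integrableOn_Ioc_div_of_le_mul_sub (K := L) htc.2 hC₁.ne'
    (fun t ht => ⟨sub_pos.2 (hsep t (hsub ht) ht.1.ne'), ?_⟩) hdiv
  have hlip := hγ.norm_sub_norm_le_mul_dist (hsub ht) (Ioo_subset_Icc_self htc)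
  rwa [hcol, Real.dist_eq, abs_of_pos (sub_pos.2 ht.1)] at hlip

/-- If the repelling potential satisfies `W(q) ≥ C₁/(‖q‖ − ρ) − C₂` for `‖q‖ > ρ`, and a
Lipschitz path `γ` on `[0,T]` reaches distance `ρ` exactly at an interior time `t_c`, then
the averaged interaction integral diverges: the lower-bound function
`t ↦ C₁/(‖γ(t)‖ − ρ) − C₂` is not Lebesgue integrable on `[0,T]`. -/
theorem collision_integral_diverges (d : ℕ)
    (ρ C₁ C₂ T : ℝ) (hρ : 0 ≤ ρ) (hC₁ : 0 < C₁) (hT : 0 < T)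
    (W : EuclideanSpace ℝ (Fin d) → ℝ)
    (hW : ∀ q, ρ < ‖q‖ → C₁ / (‖q‖ - ρ) - C₂ ≤ W q)
    (γ : ℝ → EuclideanSpace ℝ (Fin d)) (L : NNReal)
    (hγ : LipschitzOnWith L γ (Icc 0 T))
    (tc : ℝ) (htc : tc ∈ Ioo 0 T)
    (hcol : ‖γ tc‖ = ρ)
    (hsep : ∀ t ∈ Icc 0 T, t ≠ tc → ρ < ‖γ t‖) :
    ¬ IntegrableOn (fun t => C₁ / (‖γ t‖ - ρ) - C₂) (Icc 0 T) volume :=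
  collision_integral_diverges_general d ρ C₁ C₂ T hC₁ γ L hγ tc htc hcol hsep
end

section
/- Let q* : ℝ → ℝ be the 2π-periodic saw-tooth function with q*(t) = t for t ∈ [0, π] and q*(t) = 2π − t for t ∈ [π, 2π], and let W : ℝ → ℝ be continuous. Then for every ϑ ∈ (0, π), ∫₀^{2π} W(q*(s) − q*(s + ϑ)) ds = (π − ϑ)(W(−ϑ) + W(ϑ)) + ∫_{π−ϑ}^{π} ( W(2s − 2π + ϑ) + W(−2s + 2π − ϑ) ) ds. -/
open Set Real intervalIntegral
open MeasureTheory (volume)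

/-!
On `[0, 2π]` the difference `q*(s) − q*(s + ϑ)` is piecewise affine with breakpoints
`π − ϑ`, `π`, `2π − ϑ`: it equals `−ϑ`, then `2s − 2π + ϑ`, then `ϑ`, then `4π − 2s − ϑ`
(on the last piece `s + ϑ` has wrapped past `2π`). The two constant pieces have length
`π − ϑ`, and translating the last affine piece by `−π` moves it onto `[π − ϑ, π]`,
next to the other one.
-/

theorem intervalIntegrable_comp_of_eqOn_Icc {W f g : ℝ → ℝ} {a b : ℝ} (hab : a ≤ b)
    (hW : Continuous W) (hg : Continuous g) (h : EqOn f g (Icc a b)) :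
    IntervalIntegrable (fun x ↦ W (f x)) volume a b :=
  ((hW.comp hg).continuousOn.congr (h.comp_left (g := W))).intervalIntegrable_of_Icc hab

theorem integral_comp_eq_of_eqOn_Icc {W f g : ℝ → ℝ} {a b : ℝ} (hab : a ≤ b)
    (h : EqOn f g (Icc a b)) : ∫ x in a..b, W (f x) = ∫ x in a..b, W (g x) :=
  integral_congr (by rw [uIcc_of_le hab]; exact h.comp_left)

section Sawtooth

variable {q : ℝ → ℝ} {ϑ : ℝ}

theorem sawtooth_sub_shift_eqOn_Icc_zero (h₁ : ∀ t ∈ Icc 0 π, q t = t) (hϑ : 0 ≤ ϑ) :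
    EqOn (fun s ↦ q s - q (s + ϑ)) (fun _ ↦ -ϑ) (Icc 0 (π - ϑ)) := by
  rintro s ⟨hs₀, hs₁⟩
  simp only [h₁ s ⟨hs₀, by linarith⟩, h₁ (s + ϑ) ⟨by linarith, by linarith⟩]
  ring

theorem sawtooth_sub_shift_eqOn_Icc_pi_sub (h₁ : ∀ t ∈ Icc 0 π, q t = t)
    (h₂ : ∀ t ∈ Icc π (2 * π), q t = 2 * π - t) (hϑ : ϑ ≤ π) :
    EqOn (fun s ↦ q s - q (s + ϑ)) (fun s ↦ 2 * s - 2 * π + ϑ) (Icc (π - ϑ) π) := by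
  rintro s ⟨hs₀, hs₁⟩
  simp only [h₁ s ⟨by linarith, hs₁⟩, h₂ (s + ϑ) ⟨by linarith, by linarith⟩]
  ring

theorem sawtooth_sub_shift_eqOn_Icc_pi (h₂ : ∀ t ∈ Icc π (2 * π), q t = 2 * π - t)
    (hϑ : 0 ≤ ϑ) : EqOn (fun s ↦ q s - q (s + ϑ)) (fun _ ↦ ϑ) (Icc π (2 * π - ϑ)) := by
  rintro s ⟨hs₀, hs₁⟩
  simp only [h₂ s ⟨hs₀, by linarith⟩, h₂ (s + ϑ) ⟨by linarith, by linarith⟩]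
  ring

theorem sawtooth_sub_shift_eqOn_Icc_two_pi_sub (hper : Function.Periodic q (2 * π))
    (h₁ : ∀ t ∈ Icc 0 π, q t = t) (h₂ : ∀ t ∈ Icc π (2 * π), q t = 2 * π - t)
    (hϑ : ϑ ≤ π) :
    EqOn (fun s ↦ q s - q (s + ϑ)) (fun s ↦ -(2 * (s - π)) + 2 * π - ϑ)
      (Icc (2 * π - ϑ) (2 * π)) := by
  rintro s ⟨hs₀, hs₁⟩
  simp only [h₂ s ⟨by linarith, hs₁⟩, ← hper.sub_eq (s + ϑ),
    h₁ (s + ϑ - 2 * π) ⟨by linarith, by linarith⟩]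
  ring

end Sawtooth

/-- Explicit formula for the saw-tooth averaged interaction: for the `2π`-periodic
saw-tooth `q*` (`q*(t) = t` on `[0,π]`, `q*(t) = 2π − t` on `[π,2π]`) and continuous `W`,
for every `ϑ ∈ (0,π)`,
`∫₀^{2π} W(q*(s) − q*(s+ϑ)) ds = (π−ϑ)(W(−ϑ)+W(ϑ)) + ∫_{π−ϑ}^{π} (W(2s−2π+ϑ) + W(−2s+2π−ϑ)) ds`. -/
theorem sawtooth_average_formula
    (qstar : ℝ → ℝ)
    (hper : Function.Periodic qstar (2 * Real.pi))
    (h₁ : ∀ t ∈ Icc (0:ℝ) Real.pi, qstar t = t)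
    (h₂ : ∀ t ∈ Icc Real.pi (2 * Real.pi), qstar t = 2 * Real.pi - t)
    (W : ℝ → ℝ) (hW : Continuous W) :
    ∀ ϑ ∈ Ioo (0:ℝ) Real.pi,
      (∫ s in (0:ℝ)..(2 * Real.pi), W (qstar s - qstar (s + ϑ)))
        = (Real.pi - ϑ) * (W (-ϑ) + W ϑ)
          + ∫ s in (Real.pi - ϑ)..Real.pi,
              (W (2 * s - 2 * Real.pi + ϑ) + W (-(2 * s) + 2 * Real.pi - ϑ)) := by
  rintro ϑ ⟨hϑ₀, hϑπ⟩
  have hπ := pi_pos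
  have e₁ := sawtooth_sub_shift_eqOn_Icc_zero h₁ hϑ₀.le
  have e₂ := sawtooth_sub_shift_eqOn_Icc_pi_sub h₁ h₂ hϑπ.le
  have e₃ := sawtooth_sub_shift_eqOn_Icc_pi h₂ hϑ₀.le
  have e₄ := sawtooth_sub_shift_eqOn_Icc_two_pi_sub hper h₁ h₂ hϑπ.le
  have i₁ := intervalIntegrable_comp_of_eqOn_Icc (by linarith) hW (by fun_prop) e₁
  have i₂ := intervalIntegrable_comp_of_eqOn_Icc (by linarith) hW (by fun_prop) e₂
  have i₃ := intervalIntegrable_comp_of_eqOn_Icc (by linarith) hW (by fun_prop) e₃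
  have i₄ := intervalIntegrable_comp_of_eqOn_Icc (by linarith) hW (by fun_prop) e₄
  have shift : ∫ s in (2 * π - ϑ)..(2 * π), W (-(2 * (s - π)) + 2 * π - ϑ)
      = ∫ s in (π - ϑ)..π, W (-(2 * s) + 2 * π - ϑ) := by
    rw [integral_comp_sub_right (fun s ↦ W (-(2 * s) + 2 * π - ϑ))]
    congr 1 <;> ring
  rw [← integral_add_adjacent_intervals ((i₁.trans i₂).trans i₃) i₄,
    ← integral_add_adjacent_intervals (i₁.trans i₂) i₃, ← integral_add_adjacent_intervals i₁ i₂,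
    integral_comp_eq_of_eqOn_Icc (by linarith) e₁, integral_comp_eq_of_eqOn_Icc (by linarith) e₂,
    integral_comp_eq_of_eqOn_Icc (by linarith) e₃, integral_comp_eq_of_eqOn_Icc (by linarith) e₄,
    shift, integral_const, integral_const, smul_eq_mul, smul_eq_mul,
    integral_add ((by fun_prop : Continuous _).intervalIntegrable _ _)
      ((by fun_prop : Continuous _).intervalIntegrable _ _)]
  ring
end

section
/- Let q* be the 2π-periodic saw-tooth (q*(t) = t on [0, π], q*(t) = 2π − t on [π, 2π]) and let W : ℝ → ℝ be a C^∞ even function. Define W_avg(ϑ) = (1/2π) ∫₀^{2π} W(q*(s) − q*(s + ϑ)) ds. Then for all ϑ ∈ (0, π): W_avg(ϑ) = W(ϑ) + (1/π) ∫₀^ϑ ( W(ϑ − 2u) − W(ϑ) ) du, and the derivative satisfies W_avg′(ϑ) = (1 − ϑ/π) W′(ϑ). In particular W_avg′(ϑ) → 0 as ϑ → 0⁺ and as ϑ → π⁻. -/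
open Set Filter

/-- For a `C^∞` even interaction `W` and the saw-tooth average
`W_avg(ϑ) = (1/2π)∫₀^{2π} W(q*(s) − q*(s+ϑ)) ds`, on `(0,π)` one has
`W_avg(ϑ) = W(ϑ) + (1/π)∫₀^ϑ (W(ϑ−2u) − W(ϑ)) du` and
`W_avg′(ϑ) = (1 − ϑ/π) W′(ϑ)`; in particular `W_avg′ → 0` as `ϑ → 0⁺` and `ϑ → π⁻`. -/
theorem sawtooth_average_derivative
    (qstar : ℝ → ℝ)
    (hper : Function.Periodic qstar (2 * Real.pi))
    (h₁ : ∀ t ∈ Icc (0:ℝ) Real.pi, qstar t = t)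
    (h₂ : ∀ t ∈ Icc Real.pi (2 * Real.pi), qstar t = 2 * Real.pi - t)
    (W : ℝ → ℝ) (hW : ContDiff ℝ (⊤ : ℕ∞) W) (heven : ∀ x, W (-x) = W x)
    (Wavg : ℝ → ℝ)
    (hWavg : ∀ ϑ, Wavg ϑ = (1 / (2 * Real.pi)) *
        ∫ s in (0:ℝ)..(2 * Real.pi), W (qstar s - qstar (s + ϑ))) :
    (∀ ϑ ∈ Ioo (0:ℝ) Real.pi,
        Wavg ϑ = W ϑ + (1 / Real.pi) * ∫ u in (0:ℝ)..ϑ, (W (ϑ - 2 * u) - W ϑ))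
      ∧ (∀ ϑ ∈ Ioo (0:ℝ) Real.pi,
          deriv Wavg ϑ = (1 - ϑ / Real.pi) * deriv W ϑ)
      ∧ Tendsto (deriv Wavg) (nhdsWithin 0 (Ioi 0)) (nhds 0)
      ∧ Tendsto (deriv Wavg) (nhdsWithin Real.pi (Iio Real.pi)) (nhds 0) := by
  have hπ : (0:ℝ) < Real.pi := Real.pi_pos
  have hWc : Continuous W := hW.continuous
  set G : ℝ → ℝ := fun x => ∫ t in (0:ℝ)..x, W t with hGdef
  set g : ℝ → ℝ := fun x =>
    (1 - x / Real.pi) * W x + (1 / (2 * Real.pi)) * (G x - G (-x)) with hgdef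
  -- key: Wavg = g on Ioo 0 π
  have key : ∀ ϑ ∈ Ioo (0:ℝ) Real.pi, Wavg ϑ = g ϑ := by
    intro ϑ hϑ
    obtain ⟨hϑ0, hϑπ⟩ := hϑ
    set f : ℝ → ℝ := fun s => W (qstar s - qstar (s + ϑ)) with hfdef
    -- pointwise identities on the four pieces
    have e1 : EqOn f (fun _ => W (-ϑ)) (uIcc (0:ℝ) (Real.pi - ϑ)) := by
      rw [uIcc_of_le (by linarith)]
      intro s hs
      obtain ⟨hs1, hs2⟩ := hs
      have q1 : qstar s = s := h₁ s ⟨hs1, by linarith⟩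
      have q2 : qstar (s + ϑ) = s + ϑ := h₁ (s + ϑ) ⟨by linarith, by linarith⟩
      simp only [hfdef, q1, q2]
      ring_nf
    have e2 : EqOn f (fun s => W (2 * s + (ϑ - 2 * Real.pi)))
        (uIcc (Real.pi - ϑ) Real.pi) := by
      rw [uIcc_of_le (by linarith)]
      intro s hs
      obtain ⟨hs1, hs2⟩ := hs
      have q1 : qstar s = s := h₁ s ⟨by linarith, hs2⟩
      have q2 : qstar (s + ϑ) = 2 * Real.pi - (s + ϑ) :=
        h₂ (s + ϑ) ⟨by linarith, by linarith⟩
      simp only [hfdef, q1, q2]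
      ring_nf
    have e3 : EqOn f (fun _ => W ϑ) (uIcc Real.pi (2 * Real.pi - ϑ)) := by
      rw [uIcc_of_le (by linarith)]
      intro s hs
      obtain ⟨hs1, hs2⟩ := hs
      have q1 : qstar s = 2 * Real.pi - s := h₂ s ⟨hs1, by linarith⟩
      have q2 : qstar (s + ϑ) = 2 * Real.pi - (s + ϑ) :=
        h₂ (s + ϑ) ⟨by linarith, by linarith⟩
      simp only [hfdef, q1, q2]
      ring_nf
    have e4 : EqOn f (fun s => W (-2 * s + (4 * Real.pi - ϑ)))
        (uIcc (2 * Real.pi - ϑ) (2 * Real.pi)) := by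
      rw [uIcc_of_le (by linarith)]
      intro s hs
      obtain ⟨hs1, hs2⟩ := hs
      have q1 : qstar s = 2 * Real.pi - s := h₂ s ⟨by linarith, hs2⟩
      have q2 : qstar (s + ϑ) = s + ϑ - 2 * Real.pi := by
        have := hper (s + ϑ - 2 * Real.pi)
        rw [show s + ϑ - 2 * Real.pi + 2 * Real.pi = s + ϑ by ring] at this
        rw [this]
        exact h₁ (s + ϑ - 2 * Real.pi) ⟨by linarith, by linarith⟩
      simp only [hfdef, q1, q2]
      ring_nf
    -- integrability on each piece
    have integ : ∀ (a b : ℝ) (F : ℝ → ℝ), Continuous F → EqOn f F (uIcc a b) →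
        IntervalIntegrable f MeasureTheory.volume a b := by
      intro a b F hF h
      rw [intervalIntegrable_iff]
      exact ((hF.intervalIntegrable a b).def').congr_fun
        (fun x hx => (h (uIoc_subset_uIcc hx)).symm) measurableSet_uIoc
    have i1 := integ 0 (Real.pi - ϑ) _ continuous_const e1
    have c2 : Continuous fun s : ℝ => W (2 * s + (ϑ - 2 * Real.pi)) :=
      hWc.comp ((continuous_const.mul continuous_id).add continuous_const)
    have i2 := integ (Real.pi - ϑ) Real.pi _ c2 e2
    have i3 := integ Real.pi (2 * Real.pi - ϑ) _ continuous_const e3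
    have c4 : Continuous fun s : ℝ => W (-2 * s + (4 * Real.pi - ϑ)) :=
      hWc.comp ((continuous_const.mul continuous_id).add continuous_const)
    have i4 := integ (2 * Real.pi - ϑ) (2 * Real.pi) _ c4 e4
    -- split
    have hsplit : (∫ s in (0:ℝ)..(2 * Real.pi), f s)
        = (∫ s in (0:ℝ)..(Real.pi - ϑ), f s)
          + (∫ s in (Real.pi - ϑ)..Real.pi, f s)
          + (∫ s in Real.pi..(2 * Real.pi - ϑ), f s)
          + (∫ s in (2 * Real.pi - ϑ)..(2 * Real.pi), f s) := by
      rw [intervalIntegral.integral_add_adjacent_intervals i1 i2,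
        intervalIntegral.integral_add_adjacent_intervals (i1.trans i2) i3,
        intervalIntegral.integral_add_adjacent_intervals ((i1.trans i2).trans i3) i4]
    have v1 : (∫ s in (0:ℝ)..(Real.pi - ϑ), f s) = (Real.pi - ϑ) * W ϑ := by
      rw [intervalIntegral.integral_congr e1, intervalIntegral.integral_const,
        smul_eq_mul, heven]
      ring
    have v3 : (∫ s in Real.pi..(2 * Real.pi - ϑ), f s) = (Real.pi - ϑ) * W ϑ := by
      rw [intervalIntegral.integral_congr e3, intervalIntegral.integral_const,
        smul_eq_mul]
      ring
    have v2 : (∫ s in (Real.pi - ϑ)..Real.pi, f s)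
        = (1/2) * ∫ t in (-ϑ)..ϑ, W t := by
      rw [intervalIntegral.integral_congr e2,
        intervalIntegral.integral_comp_mul_add W (two_ne_zero) (ϑ - 2 * Real.pi)]
      norm_num
      congr 1
      ring
    have v4 : (∫ s in (2 * Real.pi - ϑ)..(2 * Real.pi), f s)
        = (1/2) * ∫ t in (-ϑ)..ϑ, W t := by
      rw [intervalIntegral.integral_congr e4,
        intervalIntegral.integral_comp_mul_add W (by norm_num : (-2:ℝ) ≠ 0)
          (4 * Real.pi - ϑ)]
      rw [show (-2:ℝ) * (2 * Real.pi - ϑ) + (4 * Real.pi - ϑ) = ϑ by ring,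
        show (-2:ℝ) * (2 * Real.pi) + (4 * Real.pi - ϑ) = -ϑ by ring,
        intervalIntegral.integral_symm, smul_eq_mul]
      ring
    have hGG : G ϑ - G (-ϑ) = ∫ t in (-ϑ)..ϑ, W t :=
      intervalIntegral.integral_interval_sub_left (hWc.intervalIntegrable 0 ϑ)
        (hWc.intervalIntegrable 0 (-ϑ))
    rw [hWavg ϑ, hgdef]
    simp only [← hfdef]
    rw [hsplit, v1, v2, v3, v4, hGG]
    field_simp
    ring
  -- first claim
  have claim1 : ∀ ϑ ∈ Ioo (0:ℝ) Real.pi,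
      Wavg ϑ = W ϑ + (1 / Real.pi) * ∫ u in (0:ℝ)..ϑ, (W (ϑ - 2 * u) - W ϑ) := by
    intro ϑ hϑ
    have hsub : (∫ u in (0:ℝ)..ϑ, (W (ϑ - 2 * u) - W ϑ))
        = (∫ u in (0:ℝ)..ϑ, W (-2 * u + ϑ)) - ϑ * W ϑ := by
      have hi : IntervalIntegrable (fun u : ℝ => W (-2 * u + ϑ)) MeasureTheory.volume 0 ϑ :=
        (hWc.comp ((continuous_const.mul continuous_id).add continuous_const)).intervalIntegrable 0 ϑ
      have hcongr : (∫ u in (0:ℝ)..ϑ, (W (ϑ - 2 * u) - W ϑ))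
          = ∫ u in (0:ℝ)..ϑ, (W (-2 * u + ϑ) - W ϑ) := by
        apply intervalIntegral.integral_congr
        intro u _
        show W (ϑ - 2 * u) - W ϑ = W (-2 * u + ϑ) - W ϑ
        rw [show ϑ - 2 * u = -2 * u + ϑ by ring]
      rw [hcongr, intervalIntegral.integral_sub hi intervalIntegrable_const,
        intervalIntegral.integral_const, smul_eq_mul, sub_zero]
    have hval : (∫ u in (0:ℝ)..ϑ, W (-2 * u + ϑ)) = (1/2) * ∫ t in (-ϑ)..ϑ, W t := by
      rw [intervalIntegral.integral_comp_mul_add W (by norm_num : (-2:ℝ) ≠ 0) ϑ,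
        show (-2:ℝ) * 0 + ϑ = ϑ by ring, show (-2:ℝ) * ϑ + ϑ = -ϑ by ring,
        intervalIntegral.integral_symm, smul_eq_mul]
      ring
    have hGG : G ϑ - G (-ϑ) = ∫ t in (-ϑ)..ϑ, W t :=
      intervalIntegral.integral_interval_sub_left (hWc.intervalIntegrable 0 ϑ)
        (hWc.intervalIntegrable 0 (-ϑ))
    rw [key ϑ hϑ, hgdef, hsub, hval, ← hGG]
    field_simp
    ring
  -- derivative of g
  have hWd : Differentiable ℝ W := hW.differentiable (by simp)
  have hg' : ∀ x : ℝ, HasDerivAt g ((1 - x / Real.pi) * deriv W x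
      + (-(1 / Real.pi)) * W x + (1 / (2 * Real.pi)) * (W x + W (-x))) x := by
    intro x
    have d1 : HasDerivAt (fun y : ℝ => 1 - y / Real.pi) (-(1 / Real.pi)) x := by
      simpa [one_div] using ((hasDerivAt_id x).div_const Real.pi).const_sub 1
    have d2 : HasDerivAt W (deriv W x) x := (hWd x).hasDerivAt
    have dG : HasDerivAt G (W x) x := (hWc.integral_hasStrictDerivAt 0 x).hasDerivAt
    have dGn : HasDerivAt (fun y : ℝ => G (-y)) (-W (-x)) x := by
      have h1 : HasDerivAt G (W (-x)) (-x) := (hWc.integral_hasStrictDerivAt 0 (-x)).hasDerivAt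
      have h3 := h1.comp x (hasDerivAt_neg x)
      simp at h3
      exact h3
    have := ((d1.mul d2).add (((dG.sub dGn).const_mul (1 / (2 * Real.pi)))))
    refine this.congr_deriv ?_
    ring
  have hgderiv : ∀ x ∈ Ioo (0:ℝ) Real.pi,
      deriv Wavg x = (1 - x / Real.pi) * deriv W x := by
    intro x hx
    have hev : Wavg =ᶠ[nhds x] g :=
      Filter.eventuallyEq_of_mem (isOpen_Ioo.mem_nhds hx) key
    rw [hev.deriv_eq, (hg' x).deriv, heven x]
    field_simp
    ring
  -- continuity of the limit function
  have hcont : Continuous (fun x : ℝ => (1 - x / Real.pi) * deriv W x) :=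
    (continuous_const.sub (continuous_id.div_const Real.pi)).mul
      (hW.continuous_deriv (by simp))
  -- deriv W 0 = 0
  have hderiv0 : deriv W 0 = 0 := by
    have h1 : HasDerivAt (fun y : ℝ => W (-y)) (deriv W (-0) * (-1)) 0 :=
      HasDerivAt.comp 0 (hWd (-0)).hasDerivAt (hasDerivAt_neg 0)
    have h2 : (fun y : ℝ => W (-y)) = W := funext heven
    rw [h2, neg_zero] at h1
    have := h1.deriv
    linarith
  refine ⟨claim1, hgderiv, ?_, ?_⟩
  · -- tendsto at 0+
    have hm : Ioo (0:ℝ) Real.pi ∈ nhdsWithin (0:ℝ) (Ioi 0) := by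
      refine mem_nhdsWithin.2 ⟨Iio Real.pi, isOpen_Iio, hπ, ?_⟩
      rintro x ⟨hx1, hx2⟩
      exact ⟨hx2, hx1⟩
    have ht : Tendsto (fun x : ℝ => (1 - x / Real.pi) * deriv W x)
        (nhdsWithin 0 (Ioi 0)) (nhds 0) := by
      have := (hcont.tendsto 0).mono_left (nhdsWithin_le_nhds (s := Ioi (0:ℝ)))
      simpa [hderiv0] using this
    refine ht.congr' ?_
    filter_upwards [hm] with x hx
    exact (hgderiv x hx).symm
  · -- tendsto at π-
    have hm : Ioo (0:ℝ) Real.pi ∈ nhdsWithin Real.pi (Iio Real.pi) := by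
      refine mem_nhdsWithin.2 ⟨Ioi 0, isOpen_Ioi, hπ, ?_⟩
      rintro x ⟨hx1, hx2⟩
      exact ⟨hx1, hx2⟩
    have ht : Tendsto (fun x : ℝ => (1 - x / Real.pi) * deriv W x)
        (nhdsWithin Real.pi (Iio Real.pi)) (nhds 0) := by
      have := (hcont.tendsto Real.pi).mono_left
        (nhdsWithin_le_nhds (s := Iio Real.pi))
      simpa [div_self hπ.ne'] using this
    refine ht.congr' ?_
    filter_upwards [hm] with x hx
    exact (hgderiv x hx).symm
end

section
/- Let N ≥ 2, a > 0, ω₀ ≠ 0 real numbers, ω̂ and b real row vectors of length d−1 with d ≥ 2, Â a symmetric (d−1)×(d−1) matrix, and S = (1/(ω₀N))(ω̂ᵀb + bᵀω̂ − (a/ω₀)ω̂ᵀω̂). Let R be an N×N orthogonal matrix with first row (1/√N, …, 1/√N) and let R_n ∈ ℝ^{N−1} denote the n-th column of R without its first entry. Define M to be the symmetric ((N−1) + N(d−1))-dimensional square matrix in block form: upper-left block (a/N)·I_{N−1}; upper-right blocks (1/√N)·R_n b for n = 1, …, N (each of size (N−1)×(d−1)); and lower-right N×N array of (d−1)×(d−1)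 blocks equal to Â − S on the diagonal and −S off the diagonal. Then det M = −(1/ω₀²) · ((det A)/N)^{N−1} · det A_ω, where A = [[a, b],[bᵀ, Â]] and A_ω = [[0, ω₀, ω̂],[ω₀, a, b],[ω̂ᵀ, bᵀ, Â]]. -/
open Matrix Kronecker

/-!
Conjugating `M` by `diag(1, R ⊗ 1)` decouples the centre-of-mass mode: since `R` has orthonormal
rows and constant first row `1/√N`, its row sums are `√N` for the first row and `0` otherwise, so
the coupling `−(𝟙𝟙ᵀ) ⊗ S` becomes `−N e₀e₀ᵀ ⊗ S`, and the blocks `R_k b / √N` become `e_k b / √N`.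
After regrouping coordinates the conjugated matrix is block diagonal, with one block `Â − N S` and
`N − 1` copies of `[[a/N, b/√N], [bᵀ/√N, Â]]`, whose determinant is `det A / N`. Finally `Â − N S`
is the Schur complement of the corner `[[0, ω₀], [ω₀, a]]` of `A_ω`, so that
`det A_ω = −ω₀² det (Â − N S)`.
-/

section Decoupling

variable {α ι : Type*} [CommRing α] [Fintype ι] [DecidableEq ι]

theorem det_fromBlocks_mul_self_smul {l o : Type*} [Fintype l] [DecidableEq l] [Fintype o]
    [DecidableEq o] (c : α) (A : Matrix l l α) (B : Matrix l o α) (C : Matrix o l α)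
    (D : Matrix o o α) :
    (fromBlocks ((c * c) • A) (c • B) (c • C) D).det
      = c ^ (2 * Fintype.card l) * (fromBlocks A B C D).det := by
  have hconj : fromBlocks ((c * c) • A) (c • B) (c • C) D
      = fromBlocks (c • 1) 0 0 1 * fromBlocks A B C D * fromBlocks (c • 1) 0 0 1 := by
    simp [fromBlocks_multiply, smul_smul]
  rw [hconj, det_mul, det_mul, det_fromBlocks_zero₂₁, det_smul, det_one, det_one]
  ring

def modeRegroupEquiv (m : ℕ) (ι : Type*) : ι ⊕ (Fin 1 ⊕ ι) × Fin m ≃ Fin m ⊕ Fin (m + 1) × ι where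
  toFun
    | .inl s => .inr (0, s)
    | .inr (.inl _, j) => .inl j
    | .inr (.inr s, j) => .inr (j.succ, s)
  invFun
    | .inl j => .inr (.inl 0, j)
    | .inr p => Fin.cases (.inl p.2) (fun j => .inr (.inr p.2, j)) p.1
  left_inv := by
    rintro (s | ⟨z | s, j⟩)
    · rfl
    · rw [Subsingleton.elim z 0]
    · rfl
  right_inv := by
    rintro (j | ⟨k, s⟩)
    · rfl
    · induction k using Fin.cases <;> rfl

def decoupledModeMatrix (m : ℕ) (E : Matrix ι ι α) (T : Matrix (Fin 1 ⊕ ι) (Fin 1 ⊕ ι) α) :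
    Matrix (Fin m ⊕ Fin (m + 1) × ι) (Fin m ⊕ Fin (m + 1) × ι) α :=
  fromBlocks (diagonal fun _ => T (.inl 0) (.inl 0))
    (of fun j q => if q.1 = j.succ then T (.inl 0) (.inr q.2) else 0)
    (of fun p k => if p.1 = k.succ then T (.inr p.2) (.inl 0) else 0)
    (of fun p q => if p.1 = q.1 then (if p.1 = 0 then E p.2 q.2 else T (.inr p.2) (.inr q.2))
      else 0)

theorem det_decoupledModeMatrix (m : ℕ) (E : Matrix ι ι α)
    (T : Matrix (Fin 1 ⊕ ι) (Fin 1 ⊕ ι) α) :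
    (decoupledModeMatrix m E T).det = E.det * T.det ^ m := by
  have hblocks : (decoupledModeMatrix m E T).submatrix (modeRegroupEquiv m ι)
      (modeRegroupEquiv m ι) = fromBlocks E 0 0 (blockDiagonal fun _ => T) := by
    ext (s | ⟨z | s, j⟩) (t | ⟨w | t, k⟩) <;>
      simp [decoupledModeMatrix, modeRegroupEquiv, blockDiagonal_apply, diagonal_apply,
        Fin.succ_ne_zero, (Fin.succ_ne_zero _).symm, Fin.fin_one_eq_zero, eq_comm]
  rw [← det_submatrix_equiv_self (modeRegroupEquiv m ι), hblocks, det_fromBlocks_zero₂₁,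
    det_blockDiagonal, Finset.prod_const, Finset.card_univ, Fintype.card_fin]

end Decoupling

section ConstantFirstRow

variable {K ι κ : Type*} [Field K] [Fintype κ] [DecidableEq ι] {R : Matrix ι κ K} {i₀ : ι}
  {c : K}

theorem card_mul_mul_self_eq_one_of_mul_transpose_eq_one (hR : R * Rᵀ = 1)
    (hrow : ∀ k, R i₀ k = c) :
    (Fintype.card κ : K) * (c * c) = 1 := by
  simpa [mul_apply, hrow] using congrFun (congrFun hR i₀) i₀

theorem sum_row_eq_of_mul_transpose_eq_one (hR : R * Rᵀ = 1) (hrow : ∀ k, R i₀ k = c) (i : ι) :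
    ∑ k, R i k = if i = i₀ then c⁻¹ else 0 := by
  have hc : c ≠ 0 := by
    rintro rfl
    simpa using card_mul_mul_self_eq_one_of_mul_transpose_eq_one hR hrow
  calc ∑ k, R i k = c⁻¹ * ∑ k, R i k * R i₀ k := by
        simp only [hrow, ← Finset.sum_mul]
        field_simp
    _ = c⁻¹ * (R * Rᵀ) i i₀ := by simp only [mul_apply, transpose_apply]
    _ = _ := by rw [hR, one_apply, mul_ite, mul_one, mul_zero]

end ConstantFirstRow

section AveragedTwist

variable {m n : ℕ} (a c : ℝ) (b : Fin n → ℝ) (Ahat S : Matrix (Fin n) (Fin n) ℝ)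

noncomputable def averagedTwistMatrix (R : Matrix (Fin (m + 1)) (Fin (m + 1)) ℝ) :
    Matrix (Fin m ⊕ Fin (m + 1) × Fin n) (Fin m ⊕ Fin (m + 1) × Fin n) ℝ :=
  fromBlocks (of fun j k => if j = k then a / (m + 1 : ℝ) else 0)
    (of fun j p => c * R j.succ p.1 * b p.2)
    (of fun p j => c * R j.succ p.1 * b p.2)
    (of fun p q => (if p.1 = q.1 then Ahat p.2 q.2 else 0) - S p.2 q.2)

variable {R : Matrix (Fin (m + 1)) (Fin (m + 1)) ℝ}

theorem rotation_mul_averagedTwistMatrix (hR : R * Rᵀ = 1) (hrow : ∀ k, R 0 k = c) :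
    fromBlocks 1 0 0 (R ⊗ₖ 1) * averagedTwistMatrix a c b Ahat S R
      = decoupledModeMatrix m (Ahat - ((m : ℝ) + 1) • S)
          (fromBlocks ((c * c) • (a • (1 : Matrix (Fin 1) (Fin 1) ℝ))) (c • of fun _ j => b j)
            (c • of fun j _ => b j) Ahat) *
        fromBlocks 1 0 0 (R ⊗ₖ 1) := by
  have hRR (i k) : ∑ l, R i l * R k l = if i = k then 1 else 0 := by
    simpa only [mul_apply, transpose_apply, one_apply] using congrFun (congrFun hR i) k
  have hcc : ((m : ℝ) + 1) * (c * c) = 1 := by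
    simpa using card_mul_mul_self_eq_one_of_mul_transpose_eq_one hR hrow
  have hc : c ≠ 0 := by
    rintro rfl
    simp at hcc
  simp only [averagedTwistMatrix, decoupledModeMatrix, fromBlocks_multiply, Matrix.one_mul,
    Matrix.mul_one, Matrix.zero_mul, Matrix.mul_zero, add_zero, zero_add]
  refine fromBlocks_inj.2 ⟨?_, ?_, ?_, ?_⟩
  · have hcorner : c * c * a = a / (m + 1) := by
      field_simp
      linear_combination a * hcc
    ext j k
    simp [diagonal_apply, hcorner]
  · ext j q
    simp only [of_apply, smul_of, fromBlocks_apply₁₂, Pi.smul_apply, smul_eq_mul, mul_apply,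
      kroneckerMap_apply, one_apply, mul_ite, mul_one, mul_zero, ite_mul, zero_mul,
      Fintype.sum_prod_type, Finset.sum_ite_eq', Finset.mem_univ, if_true]
    ring
  · ext p k
    simp only [mul_apply, kroneckerMap_apply, one_apply, mul_ite, mul_one, mul_zero, of_apply,
      ite_mul, zero_mul, Fintype.sum_prod_type, Finset.sum_ite_eq, Finset.mem_univ, if_true,
      smul_of, fromBlocks_apply₂₁, Pi.smul_apply, smul_eq_mul]
    rw [Finset.sum_congr rfl fun x _ => (show R p.1 x * (c * R k.succ x * b p.2)
      = R p.1 x * R k.succ x * (c * b p.2) by ring), ← Finset.sum_mul, hRR, ite_mul, one_mul,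
      zero_mul]
  · ext p q
    simp only [mul_apply, kroneckerMap_apply, one_apply, mul_ite, mul_one, mul_zero, of_apply,
      mul_sub, ite_mul, zero_mul, Finset.sum_sub_distrib, Fintype.sum_prod_type,
      Finset.sum_ite_irrel, Finset.sum_ite_eq, Finset.mem_univ, if_true, Finset.sum_const_zero,
      Finset.sum_ite_eq', ← Finset.sum_mul, sum_row_eq_of_mul_transpose_eq_one hR hrow,
      Matrix.sub_apply, Matrix.smul_apply, smul_eq_mul, smul_of, fromBlocks_apply₂₂]
    split_ifs with h
    · rw [h, hrow]
      field_simp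
      linear_combination S p.2 q.2 * hcc
    · ring

theorem det_averagedTwistMatrix (hR : R * Rᵀ = 1) (hrow : ∀ k, R 0 k = c) :
    (averagedTwistMatrix a c b Ahat S R).det = (Ahat - ((m : ℝ) + 1) • S).det *
      ((fromBlocks (a • (1 : Matrix (Fin 1) (Fin 1) ℝ)) (of fun (_ : Fin 1) j => b j)
        (of fun j (_ : Fin 1) => b j) Ahat).det / (m + 1)) ^ m := by
  have hU : IsUnit (fromBlocks (1 : Matrix (Fin m) (Fin m) ℝ) 0 0
      (R ⊗ₖ (1 : Matrix (Fin n) (Fin n) ℝ))).det := by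
    rw [det_fromBlocks_zero₂₁, det_one, one_mul, det_kronecker, det_one, one_pow, mul_one]
    exact (isUnit_det_of_right_inverse hR).pow _
  have hcc : ((m : ℝ) + 1) * (c * c) = 1 := by
    simpa using card_mul_mul_self_eq_one_of_mul_transpose_eq_one hR hrow
  have hconj := congrArg det (rotation_mul_averagedTwistMatrix a c b Ahat S hR hrow)
  rw [det_mul, det_mul, mul_comm, hU.mul_left_inj, det_decoupledModeMatrix,
    det_fromBlocks_mul_self_smul, Fintype.card_fin, mul_one] at hconj
  have hc2 : c ^ 2 = 1 / (m + 1) := by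
    rw [eq_div_iff (by positivity)]
    linear_combination hcc
  rw [hconj, hc2, one_div_mul_eq_div]

end AveragedTwist

theorem det_fromBlocks_frequency_border {K : Type*} [Field K] {n : ℕ} (a ω₀ : K) (hω₀ : ω₀ ≠ 0)
    (b ωhat : Fin n → K) (Ahat : Matrix (Fin n) (Fin n) K) :
    (fromBlocks (of fun i j : Fin 2 => if i = 0 ∧ j = 0 then 0 else if i = 1 ∧ j = 1 then a else ω₀)
      (of fun (i : Fin 2) j => if i = 0 then ωhat j else b j)
      (of fun j (i : Fin 2) => if i = 0 then ωhat j else b j) Ahat).det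
      = -ω₀ ^ 2 * (Ahat - of fun j l =>
          (ωhat j * b l + b j * ωhat l - a / ω₀ * (ωhat j * ωhat l)) / ω₀).det := by
  have hcorner : (of fun i j : Fin 2 =>
      if i = 0 ∧ j = 0 then 0 else if i = 1 ∧ j = 1 then a else ω₀) = !![0, ω₀; ω₀, a] := by
    ext i j
    fin_cases i <;> fin_cases j <;> rfl
  have hinv : !![-a / ω₀ ^ 2, ω₀⁻¹; ω₀⁻¹, 0] * !![0, ω₀; ω₀, a] = 1 := by
    ext i j
    fin_cases i <;> fin_cases j <;> simp [field]
  let := invertibleOfLeftInverse _ _ hinv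
  have hinvOf : ⅟ !![0, ω₀; ω₀, a] = !![-a / ω₀ ^ 2, ω₀⁻¹; ω₀⁻¹, 0] := rfl
  rw [hcorner, det_fromBlocks₁₁, hinvOf, det_fin_two_of]
  congr 2
  · ring
  · ext j l
    simp only [Matrix.sub_apply, mul_apply, of_apply, cons_val', cons_val_fin_one, ite_mul,
      Fin.sum_univ_two, if_true, cons_val_zero, one_ne_zero, if_false, cons_val_one, mul_ite,
      mul_zero, add_zero, sub_right_inj]
    field_simp
    ring

theorem averaged_twist_determinant_general (m n : ℕ)
    (a ω₀ : ℝ) (hω₀ : ω₀ ≠ 0)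
    (b ωhat : Fin n → ℝ) (Ahat : Matrix (Fin n) (Fin n) ℝ)
    (S : Matrix (Fin n) (Fin n) ℝ)
    (hS : ∀ j l, S j l = (1 / (ω₀ * (m + 1 : ℝ))) *
        (ωhat j * b l + b j * ωhat l - (a / ω₀) * (ωhat j * ωhat l)))
    (R : Matrix (Fin (m + 1)) (Fin (m + 1)) ℝ)
    (horth : Rᵀ * R = 1 ∧ R * Rᵀ = 1)
    (hrow : ∀ j, R 0 j = 1 / Real.sqrt (m + 1))
    (M : Matrix (Fin m ⊕ (Fin (m + 1) × Fin n)) (Fin m ⊕ (Fin (m + 1) × Fin n)) ℝ)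
    (hM₁ : ∀ j k : Fin m, M (Sum.inl j) (Sum.inl k) = if j = k then a / (m + 1 : ℝ) else 0)
    (hM₂ : ∀ (j : Fin m) (p : Fin (m + 1) × Fin n),
        M (Sum.inl j) (Sum.inr p) = (1 / Real.sqrt (m + 1)) * R j.succ p.1 * b p.2)
    (hM₃ : ∀ (p : Fin (m + 1) × Fin n) (j : Fin m),
        M (Sum.inr p) (Sum.inl j) = (1 / Real.sqrt (m + 1)) * R j.succ p.1 * b p.2)
    (hM₄ : ∀ p q : Fin (m + 1) × Fin n,
        M (Sum.inr p) (Sum.inr q)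
          = (if p.1 = q.1 then Ahat p.2 q.2 else 0) - S p.2 q.2) :
    M.det = -(1 / ω₀ ^ 2) *
        ((Matrix.fromBlocks (a • (1 : Matrix (Fin 1) (Fin 1) ℝ))
            (Matrix.of fun (_ : Fin 1) j => b j)
            (Matrix.of fun j (_ : Fin 1) => b j) Ahat).det / (m + 1 : ℝ)) ^ m *
        (Matrix.fromBlocks
          (Matrix.of (fun i j : Fin 2 =>
            if i = 0 ∧ j = 0 then 0
            else if i = 1 ∧ j = 1 then a else ω₀))
          (Matrix.of (fun (i : Fin 2) (j : Fin n) =>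
            if i = 0 then ωhat j else b j))
          (Matrix.of (fun (j : Fin n) (i : Fin 2) =>
            if i = 0 then ωhat j else b j))
          Ahat).det := by
  have hM : M = averagedTwistMatrix a (1 / √(m + 1)) b Ahat S R := by
    ext (j | p) (k | q)
    exacts [hM₁ j k, hM₂ j q, hM₃ p k, hM₄ p q]
  have hNS : ((m : ℝ) + 1) • S
      = of fun j l => (ωhat j * b l + b j * ωhat l - a / ω₀ * (ωhat j * ωhat l)) / ω₀ := by
    ext j l
    rw [Matrix.smul_apply, smul_eq_mul, hS, of_apply]
    field_simp
  rw [hM, det_averagedTwistMatrix _ _ _ _ _ horth.2 hrow, hNS,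
    det_fromBlocks_frequency_border a ω₀ hω₀]
  have hscalar (x y : ℝ) : x * y = -(1 / ω₀ ^ 2) * y * (-ω₀ ^ 2 * x) := by
    field_simp
  exact hscalar _ _

/-- The central twist determinant identity for the averaged `N`-particle Hamiltonian
(`N = m+1 ≥ 2`, `d = n+1 ≥ 2`): with `S = (1/(ω₀N))(ω̂ᵀb + bᵀω̂ − (a/ω₀)ω̂ᵀω̂)`, an orthogonal
`R` with constant first row, truncated columns `R_k`, and the block matrix `M` with
upper-left `(a/N)·I`, upper-right blocks `(1/√N) R_k b`, diagonal blocks `Â − S` and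
off-diagonal blocks `−S`, one has `det M = −(1/ω₀²)((det A)/N)^{N−1} det A_ω`. -/
theorem averaged_twist_determinant (m n : ℕ) (hm : 1 ≤ m) (hn : 1 ≤ n)
    (a ω₀ : ℝ) (ha : 0 < a) (hω₀ : ω₀ ≠ 0)
    (b ωhat : Fin n → ℝ) (Ahat : Matrix (Fin n) (Fin n) ℝ) (hAhat : Ahat.IsSymm)
    (S : Matrix (Fin n) (Fin n) ℝ)
    (hS : ∀ j l, S j l = (1 / (ω₀ * (m + 1 : ℝ))) *
        (ωhat j * b l + b j * ωhat l - (a / ω₀) * (ωhat j * ωhat l)))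
    (R : Matrix (Fin (m + 1)) (Fin (m + 1)) ℝ)
    (horth : Rᵀ * R = 1 ∧ R * Rᵀ = 1)
    (hrow : ∀ j, R 0 j = 1 / Real.sqrt (m + 1))
    (M : Matrix (Fin m ⊕ (Fin (m + 1) × Fin n)) (Fin m ⊕ (Fin (m + 1) × Fin n)) ℝ)
    (hM₁ : ∀ j k : Fin m, M (Sum.inl j) (Sum.inl k) = if j = k then a / (m + 1 : ℝ) else 0)
    (hM₂ : ∀ (j : Fin m) (p : Fin (m + 1) × Fin n),
        M (Sum.inl j) (Sum.inr p) = (1 / Real.sqrt (m + 1)) * R j.succ p.1 * b p.2)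
    (hM₃ : ∀ (p : Fin (m + 1) × Fin n) (j : Fin m),
        M (Sum.inr p) (Sum.inl j) = (1 / Real.sqrt (m + 1)) * R j.succ p.1 * b p.2)
    (hM₄ : ∀ p q : Fin (m + 1) × Fin n,
        M (Sum.inr p) (Sum.inr q)
          = (if p.1 = q.1 then Ahat p.2 q.2 else 0) - S p.2 q.2) :
    M.det = -(1 / ω₀ ^ 2) *
        ((Matrix.fromBlocks (a • (1 : Matrix (Fin 1) (Fin 1) ℝ))
            (Matrix.of fun (_ : Fin 1) j => b j)
            (Matrix.of fun j (_ : Fin 1) => b j) Ahat).det / (m + 1 : ℝ)) ^ m *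
        (Matrix.fromBlocks
          (Matrix.of (fun i j : Fin 2 =>
            if i = 0 ∧ j = 0 then 0
            else if i = 1 ∧ j = 1 then a else ω₀))
          (Matrix.of (fun (i : Fin 2) (j : Fin n) =>
            if i = 0 then ωhat j else b j))
          (Matrix.of (fun (j : Fin n) (i : Fin 2) =>
            if i = 0 then ωhat j else b j))
          Ahat).det :=
  averaged_twist_determinant_general m n a ω₀ hω₀ b ωhat Ahat S hS R horth hrow M hM₁ hM₂ hM₃ hM₄
end

section
/- Let W : ℝ → ℝ be C^∞ and even, and let W_avg be the saw-tooth average W_avg(ϑ) = (1/2π)∫₀^{2π} W(q*(s) − q*(s+ϑ)) ds with q* the 2π-periodic saw-tooth. Then the Taylor expansion of W_avg at ϑ = 0 (from the right) is W_avg(ϑ) = W(0) + (1/2) W″(0) ϑ² + O(ϑ³), and at ϑ = π is W_avg(π + h) = W_avg(π) − (1/(2π)) W′(π) h² + O(h³). In particular, the quadratic coefficient of W_avg at the in-phase configuration is W″(0), and at the anti-phase configuration is −W′(π)/π. -/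
open Set Filter Asymptotics

lemma sawtooth_aux_step {f : ℝ → ℝ} (hd : Differentiable ℝ f) (h0 : f 0 = 0) {n : ℕ}
    (h : (deriv f) =O[nhds 0] fun x => x ^ n) : f =O[nhds 0] fun x => x ^ (n + 1) := by
  obtain ⟨C, hC0, hC⟩ := h.exists_nonneg
  have hb := hC.bound
  rw [Metric.eventually_nhds_iff] at hb
  obtain ⟨δ, hδ, hball⟩ := hb
  apply IsBigO.of_bound C
  rw [Metric.eventually_nhds_iff]
  refine ⟨δ, hδ, fun x hx => ?_⟩
  have hxabs : dist x 0 = |x| := by simp [Real.dist_eq]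
  rw [hxabs] at hx
  have key : ‖f x - f 0‖ ≤ C * |x| ^ n * ‖x - 0‖ := by
    apply Convex.norm_image_sub_le_of_norm_hasDerivWithin_le
      (f' := deriv f) (s := uIcc (0:ℝ) x)
      (fun t ht => (hd t).hasDerivAt.hasDerivWithinAt)
      ?_ (convex_uIcc _ _) (left_mem_uIcc) (right_mem_uIcc)
    intro t ht
    rw [uIcc, mem_Icc] at ht
    have htx : |t| ≤ |x| := abs_le.mpr
      ⟨le_trans (le_min (by linarith [abs_nonneg x]) (neg_abs_le x)) ht.1,
       le_trans ht.2 (max_le (abs_nonneg x) (le_abs_self x))⟩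
    have hbt : ‖deriv f t‖ ≤ C * ‖t ^ n‖ := by
      apply hball
      rw [Real.dist_eq, sub_zero]
      exact lt_of_le_of_lt htx hx
    calc ‖deriv f t‖ ≤ C * ‖t ^ n‖ := hbt
      _ = C * |t| ^ n := by rw [Real.norm_eq_abs, abs_pow]
      _ ≤ C * |x| ^ n := by
          exact mul_le_mul_of_nonneg_left (pow_le_pow_left₀ (abs_nonneg t) htx n) hC0
  rw [h0, sub_zero, sub_zero] at key
  calc ‖f x‖ ≤ C * |x| ^ n * ‖x‖ := key
    _ = C * ‖x ^ (n + 1)‖ := by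
        rw [Real.norm_eq_abs, Real.norm_eq_abs, abs_pow, pow_succ]; ring

lemma sawtooth_aux_cube {f : ℝ → ℝ} (hf : ContDiff ℝ (⊤ : ℕ∞) f) (h0 : f 0 = 0)
    (h1 : deriv f 0 = 0) (h2 : deriv (deriv f) 0 = 0) :
    f =O[nhds 0] fun x => x ^ 3 := by
  have hf1 : ContDiff ℝ (⊤ : ℕ∞) (deriv f) := (contDiff_infty_iff_deriv.mp hf).2
  have hf2 : ContDiff ℝ (⊤ : ℕ∞) (deriv (deriv f)) := (contDiff_infty_iff_deriv.mp hf1).2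
  have hf3 : ContDiff ℝ (⊤ : ℕ∞) (deriv (deriv (deriv f))) := (contDiff_infty_iff_deriv.mp hf2).2
  have b0 : (deriv (deriv (deriv f))) =O[nhds 0] fun x : ℝ => x ^ 0 := by
    simpa using (hf3.continuous.tendsto 0).isBigO_one ℝ
  have b1 : (deriv (deriv f)) =O[nhds 0] fun x : ℝ => x ^ 1 :=
    sawtooth_aux_step (hf2.differentiable (by norm_cast)) h2 b0
  have b2 : (deriv f) =O[nhds 0] fun x : ℝ => x ^ 2 :=
    sawtooth_aux_step (hf1.differentiable (by norm_cast)) h1 b1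
  exact sawtooth_aux_step (hf.differentiable (by norm_cast)) h0 b2

noncomputable def sawG (W : ℝ → ℝ) : ℝ → ℝ :=
  fun ϑ => (1 / Real.pi) * ((Real.pi - ϑ) * W ϑ + ∫ t in (0:ℝ)..ϑ, W t)

lemma sawV_hasDeriv {W : ℝ → ℝ} (hW : Continuous W) (x : ℝ) :
    HasDerivAt (fun x => ∫ t in (0:ℝ)..x, W t) (W x) x :=
  intervalIntegral.integral_hasDerivAt_right (hW.intervalIntegrable _ _)
    (hW.stronglyMeasurableAtFilter _ _) hW.continuousAt

lemma sawV_contDiff {W : ℝ → ℝ} (hW : ContDiff ℝ (⊤ : ℕ∞) W) :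
    ContDiff ℝ (⊤ : ℕ∞) (fun x => ∫ t in (0:ℝ)..x, W t) := by
  rw [contDiff_infty_iff_deriv]
  refine ⟨fun x => (sawV_hasDeriv hW.continuous x).differentiableAt, ?_⟩
  have : deriv (fun x => ∫ t in (0:ℝ)..x, W t) = W :=
    funext fun x => (sawV_hasDeriv hW.continuous x).deriv
  rw [this]; exact hW

lemma sawG_contDiff {W : ℝ → ℝ} (hW : ContDiff ℝ (⊤ : ℕ∞) W) :
    ContDiff ℝ (⊤ : ℕ∞) (sawG W) :=
  contDiff_const.mul (((contDiff_const.sub contDiff_id).mul hW).add (sawV_contDiff hW))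

lemma sawG_hasDeriv {W : ℝ → ℝ} (hW : ContDiff ℝ (⊤ : ℕ∞) W) (ϑ : ℝ) :
    HasDerivAt (sawG W) ((Real.pi - ϑ) / Real.pi * deriv W ϑ) ϑ := by
  have hpi := Real.pi_ne_zero
  have hWd : HasDerivAt W (deriv W ϑ) ϑ := (hW.differentiable (by norm_cast) ϑ).hasDerivAt
  have h1 : HasDerivAt (fun x : ℝ => (Real.pi - x) * W x)
      ((Real.pi - ϑ) * deriv W ϑ + (-1) * W ϑ) ϑ := by
    have := (((hasDerivAt_id ϑ).const_sub Real.pi)).mul hWd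
    refine this.congr_deriv ?_; simp [id]; ring
  have h2 := (h1.add (sawV_hasDeriv hW.continuous ϑ)).const_mul (1 / Real.pi)
  refine h2.congr_deriv ?_
  field_simp
  ring

lemma sawG_deriv {W : ℝ → ℝ} (hW : ContDiff ℝ (⊤ : ℕ∞) W) :
    deriv (sawG W) = fun ϑ => (Real.pi - ϑ) / Real.pi * deriv W ϑ :=
  funext fun ϑ => (sawG_hasDeriv hW ϑ).deriv

lemma sawGd_hasDeriv {W : ℝ → ℝ} (hW : ContDiff ℝ (⊤ : ℕ∞) W) (ϑ : ℝ) :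
    HasDerivAt (fun x => (Real.pi - x) / Real.pi * deriv W x)
      ((-1 / Real.pi) * deriv W ϑ + (Real.pi - ϑ) / Real.pi * deriv (deriv W) ϑ) ϑ := by
  have hW1 : ContDiff ℝ (⊤ : ℕ∞) (deriv W) := (contDiff_infty_iff_deriv.mp hW).2
  have hWd : HasDerivAt (deriv W) (deriv (deriv W) ϑ) ϑ :=
    (hW1.differentiable (by norm_cast) ϑ).hasDerivAt
  have h1 : HasDerivAt (fun x : ℝ => (Real.pi - x) / Real.pi) (-1 / Real.pi) ϑ := by
    exact (((hasDerivAt_id ϑ).const_sub Real.pi)).div_const Real.pi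
  have := h1.mul hWd
  exact this

lemma deriv_even_zero {W : ℝ → ℝ} (heven : ∀ x, W (-x) = W x) :
    deriv W 0 = 0 := by
  have h1 : deriv (fun x => W (-x)) 0 = deriv W 0 := by
    congr 1; exact funext heven
  rw [deriv_comp_neg] at h1
  simp at h1
  linarith

lemma sawtooth_formula
    (qstar : ℝ → ℝ) (hper : Function.Periodic qstar (2 * Real.pi))
    (h₁ : ∀ t ∈ Icc (0:ℝ) Real.pi, qstar t = t)
    (h₂ : ∀ t ∈ Icc Real.pi (2 * Real.pi), qstar t = 2 * Real.pi - t)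
    (W : ℝ → ℝ) (hWc : Continuous W) (heven : ∀ x, W (-x) = W x)
    {ϑ : ℝ} (hϑ0 : 0 ≤ ϑ) (hϑπ : ϑ ≤ Real.pi) :
    ∫ s in (0:ℝ)..(2 * Real.pi), W (qstar s - qstar (s + ϑ))
      = 2 * ((Real.pi - ϑ) * W ϑ + ∫ t in (0:ℝ)..ϑ, W t) := by
  have hπ := Real.pi_pos
  set π := Real.pi with hπdef
  set f : ℝ → ℝ := fun s => W (qstar s - qstar (s + ϑ)) with hf
  have eA : ∀ s ∈ Icc (0:ℝ) (π - ϑ), f s = W ϑ := by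
    intro s hs
    simp only [hf]
    rw [h₁ s ⟨hs.1, by linarith [hs.2]⟩, h₁ (s + ϑ) ⟨by linarith [hs.1], by linarith [hs.2]⟩]
    rw [show s - (s + ϑ) = -ϑ by ring, heven]
  have eB : ∀ s ∈ Icc (π - ϑ) π, f s = W (2 * s + (ϑ - 2 * π)) := by
    intro s hs
    simp only [hf]
    rw [h₁ s ⟨by linarith [hs.1], hs.2⟩, h₂ (s + ϑ) ⟨by linarith [hs.1], by linarith [hs.2]⟩]
    congr 1; ring
  have eC : ∀ s ∈ Icc π (2 * π - ϑ), f s = W ϑ := by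
    intro s hs
    simp only [hf]
    rw [h₂ s ⟨hs.1, by linarith [hs.2]⟩, h₂ (s + ϑ) ⟨by linarith [hs.1], by linarith [hs.2]⟩]
    congr 1; ring
  have eD : ∀ s ∈ Icc (2 * π - ϑ) (2 * π), f s = W (-2 * s + (4 * π - ϑ)) := by
    intro s hs
    simp only [hf]
    have hq : qstar (s + ϑ) = s + ϑ - 2 * π := by
      have := hper (s + ϑ - 2 * π)
      rw [show s + ϑ - 2 * π + 2 * π = s + ϑ by ring] at this
      rw [this, h₁ (s + ϑ - 2 * π) ⟨by linarith [hs.1], by linarith [hs.2]⟩]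
    rw [h₂ s ⟨by linarith [hs.1], hs.2⟩, hq]
    congr 1; ring
  have mkInt : ∀ (a b : ℝ) (g : ℝ → ℝ), a ≤ b → Continuous g →
      (∀ s ∈ Icc a b, f s = g s) → IntervalIntegrable f MeasureTheory.volume a b := by
    intro a b g hab hg he
    rw [intervalIntegrable_iff_integrableOn_Ioc_of_le hab]
    exact (hg.integrableOn_Ioc).congr_fun
      (fun s hs => (he s (Ioc_subset_Icc_self hs)).symm) measurableSet_Ioc
  have iA : IntervalIntegrable f MeasureTheory.volume 0 (π - ϑ) :=
    mkInt _ _ (fun _ => W ϑ) (by linarith) continuous_const eA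
  have iB : IntervalIntegrable f MeasureTheory.volume (π - ϑ) π :=
    mkInt _ _ (fun s => W (2 * s + (ϑ - 2 * π))) (by linarith)
      (hWc.comp ((continuous_const.mul continuous_id).add continuous_const)) eB
  have iC : IntervalIntegrable f MeasureTheory.volume π (2 * π - ϑ) :=
    mkInt _ _ (fun _ => W ϑ) (by linarith) continuous_const eC
  have iD : IntervalIntegrable f MeasureTheory.volume (2 * π - ϑ) (2 * π) :=
    mkInt _ _ (fun s => W (-2 * s + (4 * π - ϑ))) (by linarith)
      (hWc.comp ((continuous_const.mul continuous_id).add continuous_const)) eD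
  have split : ∫ s in (0:ℝ)..(2 * π), f s
      = (∫ s in (0:ℝ)..(π - ϑ), f s) + (∫ s in (π - ϑ)..π, f s)
        + (∫ s in π..(2 * π - ϑ), f s) + (∫ s in (2 * π - ϑ)..(2 * π), f s) := by
    have s1 := intervalIntegral.integral_add_adjacent_intervals iA iB
    have s2 := intervalIntegral.integral_add_adjacent_intervals iC iD
    have s3 := intervalIntegral.integral_add_adjacent_intervals (iA.trans iB) (iC.trans iD)
    rw [← s3, ← s1, ← s2]; ring
  have he : ∫ x in (-ϑ)..(0:ℝ), W x = ∫ x in (0:ℝ)..ϑ, W x := by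
    have h := intervalIntegral.integral_comp_neg (a := (0:ℝ)) (b := ϑ) W
    simp only [heven, neg_zero] at h
    exact h.symm
  have hsplit2 : ∫ x in (-ϑ)..ϑ, W x = 2 * ∫ x in (0:ℝ)..ϑ, W x := by
    rw [← intervalIntegral.integral_add_adjacent_intervals
      (hWc.intervalIntegrable (-ϑ) 0) (hWc.intervalIntegrable 0 ϑ), he]
    ring
  have hA : ∫ s in (0:ℝ)..(π - ϑ), f s = (π - ϑ) * W ϑ := by
    rw [intervalIntegral.integral_congr (g := fun _ => W ϑ)
      (fun s hs => eA s (by rwa [uIcc_of_le (by linarith)] at hs))]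
    rw [intervalIntegral.integral_const, smul_eq_mul]; ring
  have hC : ∫ s in π..(2 * π - ϑ), f s = (π - ϑ) * W ϑ := by
    rw [intervalIntegral.integral_congr (g := fun _ => W ϑ)
      (fun s hs => eC s (by rwa [uIcc_of_le (by linarith)] at hs))]
    rw [intervalIntegral.integral_const, smul_eq_mul]; ring
  have hB : ∫ s in (π - ϑ)..π, f s = ∫ x in (0:ℝ)..ϑ, W x := by
    rw [intervalIntegral.integral_congr (g := fun s => W (2 * s + (ϑ - 2 * π)))
      (fun s hs => eB s (by rwa [uIcc_of_le (by linarith)] at hs))]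
    rw [intervalIntegral.integral_comp_mul_add W two_ne_zero (ϑ - 2 * π)]
    rw [show 2 * (π - ϑ) + (ϑ - 2 * π) = -ϑ by ring, show 2 * π + (ϑ - 2 * π) = ϑ by ring,
      hsplit2, smul_eq_mul]
    ring
  have hD : ∫ s in (2 * π - ϑ)..(2 * π), f s = ∫ x in (0:ℝ)..ϑ, W x := by
    rw [intervalIntegral.integral_congr (g := fun s => W (-2 * s + (4 * π - ϑ)))
      (fun s hs => eD s (by rwa [uIcc_of_le (by linarith)] at hs))]
    rw [intervalIntegral.integral_comp_mul_add W (by norm_num : (-2:ℝ) ≠ 0) (4 * π - ϑ)]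
    rw [show -2 * (2 * π - ϑ) + (4 * π - ϑ) = ϑ by ring,
      show -2 * (2 * π) + (4 * π - ϑ) = -ϑ by ring]
    rw [intervalIntegral.integral_symm, hsplit2, smul_eq_mul]
    ring
  rw [split, hA, hB, hC, hD]
  ring

lemma sawtooth_symm
    (qstar : ℝ → ℝ) (hper : Function.Periodic qstar (2 * Real.pi))
    (W : ℝ → ℝ) (heven : ∀ x, W (-x) = W x) (ϑ : ℝ) :
    ∫ s in (0:ℝ)..(2 * Real.pi), W (qstar s - qstar (s + (2 * Real.pi - ϑ)))
      = ∫ s in (0:ℝ)..(2 * Real.pi), W (qstar s - qstar (s + ϑ)) := by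
  set π := Real.pi
  set g : ℝ → ℝ := fun u => W (qstar u - qstar (u + ϑ)) with hg
  have hgper : Function.Periodic g (2 * π) := by
    intro u
    simp only [hg]
    rw [show u + 2 * π + ϑ = (u + ϑ) + 2 * π by ring, hper u, hper (u + ϑ)]
  have key : ∀ s : ℝ, W (qstar s - qstar (s + (2 * π - ϑ))) = g (s - ϑ) := by
    intro s
    have h1 : qstar (s + (2 * π - ϑ)) = qstar (s - ϑ) := by
      rw [show s + (2 * π - ϑ) = (s - ϑ) + 2 * π by ring, hper]
    simp only [hg, h1, show s - ϑ + ϑ = s by ring]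
    rw [show qstar s - qstar (s - ϑ) = -(qstar (s - ϑ) - qstar s) by ring, heven]
  calc ∫ s in (0:ℝ)..(2 * π), W (qstar s - qstar (s + (2 * π - ϑ)))
      = ∫ s in (0:ℝ)..(2 * π), g (s - ϑ) := by
        exact intervalIntegral.integral_congr fun s _ => key s
    _ = ∫ s in (0 - ϑ)..(2 * π - ϑ), g s := intervalIntegral.integral_comp_sub_right g ϑ
    _ = ∫ s in (0:ℝ)..(2 * π), g s := by
        have := hgper.intervalIntegral_add_eq (0 - ϑ) 0
        rw [show 0 - ϑ + 2 * π = 2 * π - ϑ by ring, zero_add] at this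
        exact this

/-- Taylor expansions of the saw-tooth averaged potential for even `C^∞` `W`:
`W_avg(ϑ) = W(0) + (1/2)W″(0)ϑ² + O(ϑ³)` as `ϑ → 0⁺`, and
`W_avg(π+h) = W_avg(π) − (1/(2π))W′(π)h² + O(h³)` as `h → 0`. -/
theorem sawtooth_average_taylor
    (qstar : ℝ → ℝ)
    (hper : Function.Periodic qstar (2 * Real.pi))
    (h₁ : ∀ t ∈ Icc (0:ℝ) Real.pi, qstar t = t)
    (h₂ : ∀ t ∈ Icc Real.pi (2 * Real.pi), qstar t = 2 * Real.pi - t)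
    (W : ℝ → ℝ) (hW : ContDiff ℝ (⊤ : ℕ∞) W) (heven : ∀ x, W (-x) = W x)
    (Wavg : ℝ → ℝ)
    (hWavg : ∀ ϑ, Wavg ϑ = (1 / (2 * Real.pi)) *
        ∫ s in (0:ℝ)..(2 * Real.pi), W (qstar s - qstar (s + ϑ))) :
    ((fun ϑ : ℝ => Wavg ϑ - (W 0 + (1 / 2) * iteratedDeriv 2 W 0 * ϑ ^ 2))
        =O[nhdsWithin 0 (Ioi 0)] fun ϑ : ℝ => ϑ ^ 3)
      ∧ ((fun h : ℝ => Wavg (Real.pi + h)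
            - (Wavg Real.pi - (1 / (2 * Real.pi)) * deriv W Real.pi * h ^ 2))
          =O[nhds 0] fun h : ℝ => h ^ 3) := by
  have hπ := Real.pi_pos
  have hπ0 : Real.pi ≠ 0 := ne_of_gt hπ
  have hWs : ContDiff ℝ (⊤ : ℕ∞) W := hW.of_le (by simp)
  have hW0 : deriv W 0 = 0 := deriv_even_zero heven
  have hform : ∀ ϑ : ℝ, 0 ≤ ϑ → ϑ ≤ Real.pi → Wavg ϑ = sawG W ϑ := by
    intro ϑ hϑ0 hϑπ
    rw [hWavg, sawtooth_formula qstar hper h₁ h₂ W hWs.continuous heven hϑ0 hϑπ]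
    simp only [sawG]
    field_simp
  have hsym : ∀ h : ℝ, Wavg (Real.pi + h) = Wavg (Real.pi - h) := by
    intro h
    rw [hWavg, hWavg]
    have := sawtooth_symm qstar hper W heven (Real.pi - h)
    rw [show 2 * Real.pi - (Real.pi - h) = Real.pi + h by ring] at this
    rw [this]
  set D2 := deriv (deriv W) 0 with hD2
  have hiD2 : iteratedDeriv 2 W 0 = D2 := by
    simp [iteratedDeriv_succ, iteratedDeriv_zero, hD2]
  constructor
  · -- part 1
    set F : ℝ → ℝ := fun ϑ => sawG W ϑ - (W 0 + 1 / 2 * D2 * ϑ ^ 2) with hF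
    have hFd : ∀ ϑ, HasDerivAt F ((Real.pi - ϑ) / Real.pi * deriv W ϑ - D2 * ϑ) ϑ := by
      intro ϑ
      have h2 : HasDerivAt (fun x : ℝ => W 0 + 1 / 2 * D2 * x ^ 2) (D2 * ϑ) ϑ := by
        have := ((hasDerivAt_pow 2 ϑ).const_mul ((1:ℝ) / 2 * D2)).const_add (W 0)
        refine this.congr_deriv ?_
        simp; ring
      exact (sawG_hasDeriv hWs ϑ).sub h2
    have hderivF : deriv F = fun ϑ => (Real.pi - ϑ) / Real.pi * deriv W ϑ - D2 * ϑ :=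
      funext fun ϑ => (hFd ϑ).deriv
    have hF0 : F 0 = 0 := by
      simp only [hF, sawG, intervalIntegral.integral_same]
      field_simp
      ring
    have hF1 : deriv F 0 = 0 := by rw [hderivF]; simp [hW0]
    have hFd2 : ∀ ϑ, HasDerivAt (deriv F)
        ((-1 / Real.pi) * deriv W ϑ + (Real.pi - ϑ) / Real.pi * deriv (deriv W) ϑ - D2) ϑ := by
      intro ϑ
      rw [hderivF]
      have hp : HasDerivAt (fun x : ℝ => D2 * x) D2 ϑ := by
        simpa using (hasDerivAt_id ϑ).const_mul D2
      exact (sawGd_hasDeriv hWs ϑ).sub hp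
    have hF2 : deriv (deriv F) 0 = 0 := by
      rw [(hFd2 0).deriv, hW0]
      field_simp
      rw [← hD2]; ring
    have hFsmooth : ContDiff ℝ (⊤ : ℕ∞) F := by
      apply (sawG_contDiff hWs).sub
      exact contDiff_const.add (contDiff_const.mul (contDiff_id.pow 2))
    have hO1 : F =O[nhds 0] fun x : ℝ => x ^ 3 := sawtooth_aux_cube hFsmooth hF0 hF1 hF2
    have hev : (fun ϑ : ℝ => Wavg ϑ - (W 0 + (1 / 2) * iteratedDeriv 2 W 0 * ϑ ^ 2))
        =ᶠ[nhdsWithin 0 (Ioi 0)] F := by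
      filter_upwards [Ioo_mem_nhdsGT_of_mem (⟨le_refl (0:ℝ), hπ⟩ : (0:ℝ) ∈ Ico 0 Real.pi)]
        with ϑ hϑ
      rw [hiD2, hform ϑ (le_of_lt hϑ.1) (le_of_lt hϑ.2)]
    exact hev.trans_isBigO (hO1.mono nhdsWithin_le_nhds)
  · -- part 2
    set c : ℝ := 1 / (2 * Real.pi) * deriv W Real.pi with hc
    set K : ℝ → ℝ := fun t => sawG W (Real.pi - t) - (sawG W Real.pi - c * t ^ 2) with hK
    have hKsmooth : ContDiff ℝ (⊤ : ℕ∞) K := by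
      apply ((sawG_contDiff hWs).comp (contDiff_const.sub contDiff_id)).sub
      exact contDiff_const.sub (contDiff_const.mul (contDiff_id.pow 2))
    have hK0 : K 0 = 0 := by simp [hK]
    have hKd : ∀ t, HasDerivAt K
        (-((Real.pi - (Real.pi - t)) / Real.pi * deriv W (Real.pi - t)) + c * (2 * t)) t := by
      intro t
      have hcomp : HasDerivAt (fun t : ℝ => sawG W (Real.pi - t))
          (((Real.pi - (Real.pi - t)) / Real.pi * deriv W (Real.pi - t)) * (-1)) t :=
        (sawG_hasDeriv hWs (Real.pi - t)).comp t ((hasDerivAt_id t).const_sub Real.pi)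
      have hpoly : HasDerivAt (fun t : ℝ => sawG W Real.pi - c * t ^ 2) (-(c * (2 * t))) t := by
        have := ((hasDerivAt_pow 2 t).const_mul c).const_sub (sawG W Real.pi)
        refine this.congr_deriv ?_
        simp
      have := hcomp.sub hpoly
      refine this.congr_deriv ?_; ring
    have hderivK : deriv K
        = fun t => -((Real.pi - (Real.pi - t)) / Real.pi * deriv W (Real.pi - t)) + c * (2 * t) :=
      funext fun t => (hKd t).deriv
    have hK1 : deriv K 0 = 0 := by rw [hderivK]; simp
    have hKd2 : ∀ t, HasDerivAt (deriv K)
        (-(((-1 / Real.pi) * deriv W (Real.pi - t)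
            + (Real.pi - (Real.pi - t)) / Real.pi * deriv (deriv W) (Real.pi - t)) * (-1))
          + c * 2) t := by
      intro t
      rw [hderivK]
      have hcomp : HasDerivAt
          (fun t : ℝ => (Real.pi - (Real.pi - t)) / Real.pi * deriv W (Real.pi - t))
          (((-1 / Real.pi) * deriv W (Real.pi - t)
            + (Real.pi - (Real.pi - t)) / Real.pi * deriv (deriv W) (Real.pi - t)) * (-1)) t :=
        (sawGd_hasDeriv hWs (Real.pi - t)).comp t ((hasDerivAt_id t).const_sub Real.pi)
      have hlin : HasDerivAt (fun t : ℝ => c * (2 * t)) (c * 2) t := by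
        simpa using ((hasDerivAt_id t).const_mul (2:ℝ)).const_mul c
      exact hcomp.neg.add hlin
    have hK2 : deriv (deriv K) 0 = 0 := by
      rw [(hKd2 0).deriv, hc]
      field_simp
      ring
    have hOK : K =O[nhds 0] fun t : ℝ => t ^ 3 := sawtooth_aux_cube hKsmooth hK0 hK1 hK2
    have habs : Filter.Tendsto (fun h : ℝ => |h|) (nhds 0) (nhds 0) := by
      simpa using continuous_abs.tendsto (0:ℝ)
    have hKabs : ((fun t => K t) ∘ fun h : ℝ => |h|)
        =O[nhds 0] ((fun t : ℝ => t ^ 3) ∘ fun h : ℝ => |h|) := hOK.comp_tendsto habs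
    have habs3 : ((fun t : ℝ => t ^ 3) ∘ fun h : ℝ => |h|) =O[nhds 0] fun h : ℝ => h ^ 3 := by
      apply IsBigO.of_bound 1
      filter_upwards with h
      simp [Function.comp, Real.norm_eq_abs, abs_pow, abs_abs]
    have hev2 : (fun h : ℝ => Wavg (Real.pi + h)
          - (Wavg Real.pi - (1 / (2 * Real.pi)) * deriv W Real.pi * h ^ 2))
        =ᶠ[nhds 0] ((fun t => K t) ∘ fun h : ℝ => |h|) := by
      have hball : ∀ᶠ h : ℝ in nhds 0, |h| ≤ Real.pi := by
        filter_upwards [Metric.ball_mem_nhds (0:ℝ) hπ] with h hh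
        rw [Metric.mem_ball, Real.dist_eq, sub_zero] at hh
        exact le_of_lt hh
      filter_upwards [hball] with h hh
      have h1 : Wavg (Real.pi + h) = sawG W (Real.pi - |h|) := by
        rcases le_or_gt 0 h with h0 | h0
        · rw [abs_of_nonneg h0, hsym h]
          exact hform _ (by rw [abs_of_nonneg h0] at hh; linarith) (by linarith)
        · rw [abs_of_neg h0, show Real.pi - -h = Real.pi + h by ring]
          exact hform _ (by rw [abs_of_neg h0] at hh; linarith) (by linarith)
      have h2 : Wavg Real.pi = sawG W Real.pi := hform _ (le_of_lt hπ) le_rfl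
      simp only [Function.comp, hK, h1, h2, sq_abs, hc]
    exact hev2.trans_isBigO (hKabs.trans habs3)
end
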